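/- Let f be convex on an interval I ⊆ ℝ, x₁ ≤ x₂ ≤ ... ≤ xₙ points of I, p a real n-tuple with partial sums Pᵢ = ∑_{j≤i} pⱼ satisfying 0 ≤ Pᵢ ≤ 1 and Pₙ = 1, and q an n-tuple with partial sums Qᵢ = ∑_{j≤i} qⱼ satisfying 0 < Qᵢ < 1 for i < n and Qₙ = 1. Define mᵢ = Pᵢ/Qᵢ, m̄ᵢ = (1−P_{i−1})/(1−Q_{i−1}), m* = min over all these ratios, M* = max over all these ratios. Then M*·(∑qᵢf(xᵢ) − f(∑qᵢxᵢ)) ≥ ∑pᵢf(xᵢ) − f(∑pᵢxᵢ) ≥ m*·(∑qᵢf(xᵢ) − f(∑qᵢxᵢ)). -/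

import Mathlib

/-!
Subtracting from `f` a line of slope `c` supporting it at `a = ∑ pᵢxᵢ` (supporting only on the
finitely many points involved, so that `a` may be an endpoint of `I`) gives a convex `g` whose
minimum over these points is at `a`; along the increasing nodes `xᵢ` it decreases up to `a` and
increases after it. For weights `w` whose prefix sums and suffix sums are all nonnegative, Abel
summation then gives Steffensen's inequality `∑ wᵢ g(xᵢ) ≥ (∑ wᵢ) g(a)`. With `w = p - m* q`
these sign conditions are exactly `m* Qᵢ ≤ Pᵢ` and `m* (1 - Qᵢ₋₁) ≤ 1 - Pᵢ₋₁`, and the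
inequality rearranges to `Jₙ(f,x,p) - m* Jₙ(f,x,q) ≥ m* (f b - f a - c (b - a)) ≥ 0` with
`b = ∑ qᵢxᵢ`. The upper bound is the same argument with `p` and `q` exchanged and `w = M* q - p`.
-/

open Finset

noncomputable def jensenGap {ι : Type*} [Fintype ι] (f : ℝ → ℝ) (x p : ι → ℝ) : ℝ :=
  ∑ i, p i * f (x i) - f (∑ i, p i * x i)

section Abel

variable {ι R : Type*} [LinearOrder ι] [CommRing R] [LinearOrder R] [IsOrderedRing R]

theorem Finset.sum_mul_nonneg_of_antitoneOn (s : Finset ι) {w a : ι → R}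
    (hw : ∀ i ∈ s, 0 ≤ ∑ j ∈ s with j ≤ i, w j) (ha : AntitoneOn a s)
    (ha0 : ∀ i ∈ s, 0 ≤ a i) :
    0 ≤ ∑ i ∈ s, w i * a i := by
  classical
  induction s using Finset.induction_on_max generalizing a with
  | empty => simp
  | insert m s hlt ih =>
    have hm : m ∉ s := fun h => lt_irrefl m (hlt m h)
    have hall : ∀ j ∈ insert m s, j ≤ m := by
      simpa using fun j hj => (hlt j hj).le
    -- Peeling off the constant `a m` leaves the antitone, nonnegative sequence `a - a m` on `s`.
    have hsplit : ∑ i ∈ insert m s, w i * a i =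
        a m * ∑ j ∈ insert m s with j ≤ m, w j + ∑ i ∈ s, w i * (a i - a m) := by
      rw [filter_true_of_mem hall, sum_insert hm, sum_insert hm]
      simp only [mul_sub, sum_sub_distrib, ← sum_mul]
      ring
    have hw' : ∀ i ∈ s, 0 ≤ ∑ j ∈ s with j ≤ i, w j := fun i hi => by
      have := hw i (mem_insert_of_mem hi)
      rwa [filter_insert, if_neg (hlt i hi).not_ge] at this
    have ha' : AntitoneOn (fun i => a i - a m) s := fun i hi j hj hij =>
      sub_le_sub_right (ha (mem_insert_of_mem hi) (mem_insert_of_mem hj) hij) _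
    have ha0' : ∀ i ∈ s, 0 ≤ a i - a m := fun i hi =>
      sub_nonneg.2 (ha (mem_insert_of_mem hi) (mem_insert_self m s) (hlt i hi).le)
    rw [hsplit]
    exact add_nonneg (mul_nonneg (ha0 m (mem_insert_self m s)) (hw m (mem_insert_self m s)))
      (ih hw' ha' ha0')

theorem Finset.sum_mul_nonneg_of_monotoneOn (s : Finset ι) {w a : ι → R}
    (hw : ∀ i ∈ s, 0 ≤ ∑ j ∈ s with i ≤ j, w j) (ha : MonotoneOn a s)
    (ha0 : ∀ i ∈ s, 0 ≤ a i) :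
    0 ≤ ∑ i ∈ s, w i * a i :=
  sum_mul_nonneg_of_antitoneOn (ι := ιᵒᵈ) s hw ha.dual_left ha0

end Abel

section Steffensen

variable {ι : Type*} [Fintype ι] [LinearOrder ι]

theorem ConvexOn.sum_mul_le_sum_mul_of_forall_le {I : Set ℝ} {g : ℝ → ℝ} (hg : ConvexOn ℝ I g)
    {x : ι → ℝ} (hx : ∀ i, x i ∈ I) (hmono : Monotone x) {y : ℝ} (hy : y ∈ I)
    (hmin : ∀ i, g y ≤ g (x i)) {w : ι → ℝ}
    (hpre : ∀ i, 0 ≤ ∑ j with j ≤ i, w j) (hsuf : ∀ i, 0 ≤ ∑ j with i ≤ j, w j) :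
    (∑ i, w i) * g y ≤ ∑ i, w i * g (x i) := by
  have hseg : ∀ {s t u}, s ∈ I → u ∈ I → s ≤ t → t ≤ u → g t ≤ max (g s) (g u) :=
    fun hs hu hst htu => hg.le_on_segment hs hu (Icc_subset_segment ⟨hst, htu⟩)
  -- `g ∘ x - g y` is the sum of an antitone part (left of `y`) and a monotone part (right of `y`).
  set a : ι → ℝ := fun i => if x i < y then g (x i) - g y else 0
  set b : ι → ℝ := fun i => if x i < y then 0 else g (x i) - g y
  have ha0 : ∀ i, 0 ≤ a i := fun i => by
    simp only [a]; split_ifs <;> linarith [hmin i]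
  have hb0 : ∀ i, 0 ≤ b i := fun i => by
    simp only [b]; split_ifs <;> linarith [hmin i]
  have ha : Antitone a := fun i j hij => by
    by_cases hj : x j < y
    · have := hseg (hx i) hy (hmono hij) hj.le
      simp only [a, if_pos hj, if_pos ((hmono hij).trans_lt hj)]
      linarith [max_eq_left (hmin i)]
    · simp only [a, if_neg hj]
      exact ha0 i
  have hb : Monotone b := fun i j hij => by
    by_cases hi : x i < y
    · simp only [b, if_pos hi]
      exact hb0 j
    · have hyi := not_lt.1 hi
      have := hseg hy (hx j) hyi (hmono hij)
      simp only [b, if_neg hi, if_neg (hyi.trans (hmono hij)).not_gt]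
      linarith [max_eq_right (hmin j)]
  have hab : ∑ i, w i * (g (x i) - g y) = ∑ i, w i * a i + ∑ i, w i * b i := by
    rw [← sum_add_distrib]
    refine sum_congr rfl fun i _ => ?_
    simp only [a, b]
    split_ifs <;> ring
  have hA := sum_mul_nonneg_of_antitoneOn univ (fun i _ => hpre i) (ha.antitoneOn _)
    (fun i _ => ha0 i)
  have hB := sum_mul_nonneg_of_monotoneOn univ (fun i _ => hsuf i) (hb.monotoneOn _)
    (fun i _ => hb0 i)
  simp only [mul_sub, sum_sub_distrib, ← sum_mul] at hab
  linarith

theorem ConvexOn.exists_forall_sub_mul_le_of_finite {I : Set ℝ} {f : ℝ → ℝ} (hf : ConvexOn ℝ I f)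
    {S : Set ℝ} (hS : S.Finite) (hSI : S ⊆ I) {y : ℝ} (hy : y ∈ I) :
    ∃ c, ∀ t ∈ S, f y - c * y ≤ f t - c * t := by
  set L := (fun t => (f y - f t) / (y - t)) '' {t ∈ S | t < y}
  set R := (fun t => (f t - f y) / (t - y)) '' {t ∈ S | y < t}
  -- `c` is the largest left slope at `y`; the lower bound `r` of the right slopes stands in
  -- for it when no point of `S` lies left of `y`.
  obtain ⟨r, hr⟩ := ((hS.subset (Set.sep_subset _ _)).image _).bddBelow (s := R)
  have hL : (insert r L).Finite := ((hS.subset (Set.sep_subset _ _)).image _).insert r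
  have hLR : ∀ l ∈ insert r L, ∀ u ∈ R, l ≤ u := by
    rintro l (rfl | ⟨s, ⟨hs, hsy⟩, rfl⟩) u hu
    · exact hr hu
    · obtain ⟨t, ⟨ht, hyt⟩, rfl⟩ := hu
      exact hf.slope_mono_adjacent (hSI hs) (hSI ht) hsy hyt
  refine ⟨sSup (insert r L), fun t ht => ?_⟩
  rcases lt_trichotomy t y with hty | rfl | hyt
  · have := le_csSup hL.bddAbove (Set.mem_insert_of_mem _ ⟨t, ⟨ht, hty⟩, rfl⟩)
    rw [div_le_iff₀ (sub_pos.2 hty)] at this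
    linarith
  · rfl
  · have := csSup_le (Set.insert_nonempty _ _) fun l hl => hLR l hl _ ⟨t, ⟨ht, hyt⟩, rfl⟩
    rw [le_div_iff₀ (sub_pos.2 hyt)] at this
    linarith

end Steffensen

section JensenSteffensen

variable {ι : Type*} [Fintype ι] [LinearOrder ι]

theorem sum_mul_mem_of_ordConnected {I : Set ℝ} (hI : I.OrdConnected) {x : ι → ℝ}
    (hx : ∀ i, x i ∈ I) (hmono : Monotone x) {p : ι → ℝ} (hp : ∑ i, p i = 1)
    (hpre : ∀ i, 0 ≤ ∑ j with j ≤ i, p j) (hsuf : ∀ i, 0 ≤ ∑ j with i ≤ j, p j) :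
    ∑ i, p i * x i ∈ I := by
  obtain ⟨i₀, -, -⟩ := exists_ne_zero_of_sum_ne_zero (hp.symm ▸ one_ne_zero)
  have hne : (univ : Finset ι).Nonempty := ⟨i₀, mem_univ i₀⟩
  have hlo := (convexOn_id convex_univ).sum_mul_le_sum_mul_of_forall_le
    (fun i => Set.mem_univ (x i)) hmono (Set.mem_univ (x (univ.min' hne)))
    (fun i => hmono (min'_le univ i (mem_univ i))) hpre hsuf
  have hhi := (concaveOn_id convex_univ).neg.sum_mul_le_sum_mul_of_forall_le
    (fun i => Set.mem_univ (x i)) hmono (Set.mem_univ (x (univ.max' hne)))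
    (fun i => neg_le_neg (hmono (le_max' univ i (mem_univ i)))) hpre hsuf
  simp only [id, Pi.neg_apply, hp, one_mul, mul_neg, sum_neg_distrib, neg_le_neg_iff] at hlo hhi
  exact hI.out (hx _) (hx _) ⟨hlo, hhi⟩

theorem ConvexOn.mul_jensenGap_le_mul_jensenGap {I : Set ℝ} {f : ℝ → ℝ} (hf : ConvexOn ℝ I f)
    {x : ι → ℝ} (hx : ∀ i, x i ∈ I) (hmono : Monotone x) {p q : ι → ℝ}
    (hp : ∑ i, p i = 1) (hq : ∑ i, q i = 1)
    (hpI : ∑ i, p i * x i ∈ I) (hqI : ∑ i, q i * x i ∈ I) {α β : ℝ} (hβ : 0 ≤ β)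
    (hpre : ∀ i, β * ∑ j with j ≤ i, q j ≤ α * ∑ j with j ≤ i, p j)
    (hsuf : ∀ i, β * ∑ j with i ≤ j, q j ≤ α * ∑ j with i ≤ j, p j) :
    β * jensenGap f x q ≤ α * jensenGap f x p := by
  set a := ∑ i, p i * x i
  set b := ∑ i, q i * x i
  obtain ⟨c, hc⟩ := hf.exists_forall_sub_mul_le_of_finite ((Set.finite_range x).insert b)
    (Set.insert_subset hqI (Set.range_subset_iff.2 hx)) hpI
  have hg : ConvexOn ℝ I (fun t => f t - c * t) :=
    hf.sub ((LinearMap.mulLeft ℝ c).concaveOn hf.1)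
  have key := hg.sum_mul_le_sum_mul_of_forall_le hx hmono hpI (w := fun i => α * p i - β * q i)
    (fun i => hc _ (Set.mem_insert_of_mem _ (Set.mem_range_self i)))
    (fun i => by simpa only [sum_sub_distrib, ← mul_sum, sub_nonneg] using hpre i)
    (fun i => by simpa only [sum_sub_distrib, ← mul_sum, sub_nonneg] using hsuf i)
  have hb := hc b (Set.mem_insert b _)
  have hsum : ∑ i, (α * p i - β * q i) * (f (x i) - c * x i) =
      α * ∑ i, p i * f (x i) - β * ∑ i, q i * f (x i) - c * (α * a - β * b) := by
    simp only [a, b, mul_sum, ← sum_sub_distrib]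
    exact sum_congr rfl fun i _ => by ring
  simp only [sum_sub_distrib, ← mul_sum, hp, hq, hsum] at key
  unfold jensenGap
  nlinarith [mul_le_mul_of_nonneg_left hb hβ]

end JensenSteffensen

theorem sum_filter_ge_eq_sum_or_exists {ι M : Type*} [Fintype ι] [LinearOrder ι] [PredOrder ι]
    [AddCommGroup M] (v : ι → M) (i : ι) :
    ∑ j with i ≤ j, v j = ∑ j, v j ∨
      ∃ k < i, ∑ j with i ≤ j, v j = ∑ j, v j - ∑ j with j ≤ k, v j := by
  have hsplit := sum_filter_add_sum_filter_not univ (i ≤ ·) v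
  simp only [not_le] at hsplit
  by_cases hi : IsMin i
  · left
    rw [← hsplit, filter_false_of_mem fun j _ => hi.not_lt, sum_empty, add_zero]
  · right
    refine ⟨Order.pred i, Order.pred_lt_of_not_isMin hi, ?_⟩
    simp only [Order.le_pred_iff_of_not_isMin hi, ← hsplit, add_sub_cancel_right]

theorem sum_filter_ge_nonneg {ι : Type*} [Fintype ι] [LinearOrder ι] [PredOrder ι] {p : ι → ℝ}
    (hp : ∑ i, p i = 1) (h : ∀ i, ∑ j with j ≤ i, p j ≤ 1) (i : ι) :
    0 ≤ ∑ j with i ≤ j, p j := by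
  rcases sum_filter_ge_eq_sum_or_exists p i with hi | ⟨k, -, hi⟩ <;> rw [hi, hp]
  · exact zero_le_one
  · linarith [h k]

theorem Fin.sum_filter_le_pos {n : ℕ} {q : Fin n → ℝ} (hq : ∑ i, q i = 1)
    (h : ∀ i : Fin n, (i : ℕ) < n - 1 → 0 < ∑ j with j ≤ i, q j) (i : Fin n) :
    0 < ∑ j with j ≤ i, q j := by
  by_cases hi : (i : ℕ) < n - 1
  · exact h i hi
  · rw [filter_true_of_mem fun j _ => Fin.le_def.2 (by omega), hq]
    norm_num

theorem Fin.sum_filter_ge_pos {n : ℕ} {q : Fin n → ℝ} (hq : ∑ i, q i = 1)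
    (h : ∀ i : Fin n, (i : ℕ) < n - 1 → ∑ j with j ≤ i, q j < 1) (i : Fin n) :
    0 < ∑ j with i ≤ j, q j := by
  rcases sum_filter_ge_eq_sum_or_exists q i with hi | ⟨k, hk, hi⟩ <;> rw [hi, hq]
  · norm_num
  · linarith [h k (by omega)]

theorem stmt1_general {I : Set ℝ} {f : ℝ → ℝ} (hf : ConvexOn ℝ I f)
    {n : ℕ} (x : Fin n → ℝ) (hx : ∀ i, x i ∈ I) (hmono : Monotone x)
    (p q : Fin n → ℝ)
    (P Q Tp Tq : Fin n → ℝ)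
    (hP : ∀ i, P i = ∑ j, if j ≤ i then p j else 0)
    (hQ : ∀ i, Q i = ∑ j, if j ≤ i then q j else 0)
    (hTp : ∀ i, Tp i = ∑ j, if i ≤ j then p j else 0)
    (hTq : ∀ i, Tq i = ∑ j, if i ≤ j then q j else 0)
    (hP01 : ∀ i, 0 ≤ P i ∧ P i ≤ 1) (hPn : ∑ i, p i = 1)
    (hQ01 : ∀ i : Fin n, (i : ℕ) < n - 1 → 0 < Q i ∧ Q i < 1) (hQn : ∑ i, q i = 1)
    (mstar Mstar : ℝ)
    (hm : IsLeast ((Set.range fun i => P i / Q i) ∪ (Set.range fun i => Tp i / Tq i)) mstar)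
    (hM : IsGreatest ((Set.range fun i => P i / Q i) ∪ (Set.range fun i => Tp i / Tq i)) Mstar) :
    Mstar * (∑ i, q i * f (x i) - f (∑ i, q i * x i)) ≥
        ∑ i, p i * f (x i) - f (∑ i, p i * x i) ∧
    ∑ i, p i * f (x i) - f (∑ i, p i * x i) ≥
        mstar * (∑ i, q i * f (x i) - f (∑ i, q i * x i)) := by
  simp only [← sum_filter] at hP hQ hTp hTq
  have hQ_pos (i) : 0 < Q i :=
    hQ i ▸ Fin.sum_filter_le_pos hQn (fun k hk => hQ k ▸ (hQ01 k hk).1) i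
  have hTq_pos (i) : 0 < Tq i :=
    hTq i ▸ Fin.sum_filter_ge_pos hQn (fun k hk => hQ k ▸ (hQ01 k hk).2) i
  have hTp_nonneg (i) : 0 ≤ Tp i :=
    hTp i ▸ sum_filter_ge_nonneg hPn (fun k => hP k ▸ (hP01 k).2) i
  have hm0 : 0 ≤ mstar := by
    rcases hm.1 with ⟨i, rfl⟩ | ⟨i, rfl⟩
    exacts [div_nonneg (hP01 i).1 (hQ_pos i).le, div_nonneg (hTp_nonneg i) (hTq_pos i).le]
  have hpI := sum_mul_mem_of_ordConnected hf.1.ordConnected hx hmono hPn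
    (fun i => hP i ▸ (hP01 i).1) (fun i => hTp i ▸ hTp_nonneg i)
  have hqI := sum_mul_mem_of_ordConnected hf.1.ordConnected hx hmono hQn
    (fun i => (hQ i ▸ hQ_pos i).le) (fun i => (hTq i ▸ hTq_pos i).le)
  have hup : ∀ i, P i ≤ Mstar * Q i ∧ Tp i ≤ Mstar * Tq i := fun i =>
    ⟨(div_le_iff₀ (hQ_pos i)).1 (hM.2 (.inl ⟨i, rfl⟩)),
      (div_le_iff₀ (hTq_pos i)).1 (hM.2 (.inr ⟨i, rfl⟩))⟩
  have hlow : ∀ i, mstar * Q i ≤ P i ∧ mstar * Tq i ≤ Tp i := fun i =>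
    ⟨(le_div_iff₀ (hQ_pos i)).1 (hm.2 (.inl ⟨i, rfl⟩)),
      (le_div_iff₀ (hTq_pos i)).1 (hm.2 (.inr ⟨i, rfl⟩))⟩
  constructor
  · simpa only [one_mul, jensenGap, ge_iff_le] using
      hf.mul_jensenGap_le_mul_jensenGap hx hmono hQn hPn hqI hpI zero_le_one
        (fun i => by simpa only [one_mul, hP, hQ] using (hup i).1)
        (fun i => by simpa only [one_mul, hTp, hTq] using (hup i).2)
  · simpa only [one_mul, jensenGap, ge_iff_le] using
      hf.mul_jensenGap_le_mul_jensenGap (α := 1) hx hmono hPn hQn hpI hqI hm0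
        (fun i => by simpa only [one_mul, hP, hQ] using (hlow i).1)
        (fun i => by simpa only [one_mul, hTp, hTq] using (hlow i).2)

theorem stmt1 {I : Set ℝ} {f : ℝ → ℝ} (hf : ConvexOn ℝ I f)
    {n : ℕ} (hn : 0 < n) (x : Fin n → ℝ) (hx : ∀ i, x i ∈ I) (hmono : Monotone x)
    (p q : Fin n → ℝ)
    (P Q Tp Tq : Fin n → ℝ)
    (hP : ∀ i, P i = ∑ j, if j ≤ i then p j else 0)
    (hQ : ∀ i, Q i = ∑ j, if j ≤ i then q j else 0)
    (hTp : ∀ i, Tp i = ∑ j, if i ≤ j then p j else 0)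
    (hTq : ∀ i, Tq i = ∑ j, if i ≤ j then q j else 0)
    (hP01 : ∀ i, 0 ≤ P i ∧ P i ≤ 1) (hPn : ∑ i, p i = 1)
    (hQ01 : ∀ i : Fin n, (i : ℕ) < n - 1 → 0 < Q i ∧ Q i < 1) (hQn : ∑ i, q i = 1)
    (mstar Mstar : ℝ)
    (hm : IsLeast ((Set.range fun i => P i / Q i) ∪ (Set.range fun i => Tp i / Tq i)) mstar)
    (hM : IsGreatest ((Set.range fun i => P i / Q i) ∪ (Set.range fun i => Tp i / Tq i)) Mstar) :
    Mstar * (∑ i, q i * f (x i) - f (∑ i, q i * x i)) ≥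
        ∑ i, p i * f (x i) - f (∑ i, p i * x i) ∧
    ∑ i, p i * f (x i) - f (∑ i, p i * x i) ≥
        mstar * (∑ i, q i * f (x i) - f (∑ i, q i * x i)) :=
  stmt1_general hf x hx hmono p q P Q Tp Tq hP hQ hTp hTq hP01 hPn hQ01 hQn mstar Mstar hm hM
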